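/- arXiv:math/0307261 — 8 statements merged into one kernel-verified Lean document; each statement's English description precedes it below -/
import Mathlib

section
/- Let L be a real Lie algebra and ρ a representation of L on a real vector space V such that the only invariant vector is zero (ρ(x)v = 0 for all x ∈ L implies v = 0). Let γ₀, γ₀' be 1-cocycles of ρ and let c = {γ₀ + ∂v : v ∈ V}, c' = {γ₀' + ∂v : v ∈ V} be their cohomology classes, each an affine space modeled on V via v acting by γ ↦ γ + ∂v. Then a map f : c → c' is an affine equivariant map — i.e. there is a linear F : V → V with f(γ + ∂v) = f(γ) + ∂(F(v)) for all γ ∈ c, v ∈ V, and f(γ)(x) = F(γ(x)) for all γ ∈ c, x ∈ L — if and only if there exists a linear map T : V → V commuting with ρ(x) for every x ∈ L such that f(γ) = T ∘ γ for all γ ∈ c. -/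
/-!
Equivariance for the evaluation action forces `f γ = F ∘ γ`. Comparing `f` at `γ₀` and at
`γ₀ + ∂v` then gives `F ∘ ∂v = ∂(F v)`, which is exactly `F ∘ ρ x = ρ x ∘ F` for all `x`;
conversely such a `T` turns `γ + ∂v` into `T ∘ γ + ∂(T v)`.
-/

namespace LinearMap

variable {R L V : Type*} [CommSemiring R] [AddCommMonoid L] [Module R L]
  [AddCommMonoid V] [Module R V]

theorem comp_flip_eq_flip_apply_iff (ρ : L →ₗ[R] V →ₗ[R] V) (T : V →ₗ[R] V) :
    (∀ v, T ∘ₗ ρ.flip v = ρ.flip (T v)) ↔ ∀ x, T ∘ₗ ρ x = ρ x ∘ₗ T := by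
  simp only [LinearMap.ext_iff, comp_apply, flip_apply]
  exact forall_comm

end LinearMap

theorem affine_equivariant_maps_between_cohomology_classes_general
    {L : Type*} [LieRing L] [LieAlgebra ℝ L]
    {V : Type*} [AddCommGroup V] [Module ℝ V]
    (ρ : L →ₗ[ℝ] V →ₗ[ℝ] V)
    (γ₀ : L →ₗ[ℝ] V)
    (c c' : Set (L →ₗ[ℝ] V))
    (hc : c = {γ | ∃ v : V, γ = γ₀ + ρ.flip v})
    (f : c → c') :
    (∃ F : V →ₗ[ℝ] V,
        (∀ (g₁ g₂ : c) (v : V),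
            (g₂ : L →ₗ[ℝ] V) = (g₁ : L →ₗ[ℝ] V) + ρ.flip v →
            (f g₂ : L →ₗ[ℝ] V) = (f g₁ : L →ₗ[ℝ] V) + ρ.flip (F v)) ∧
        (∀ (g : c) (x : L), (f g : L →ₗ[ℝ] V) x = F ((g : L →ₗ[ℝ] V) x)))
      ↔ (∃ T : V →ₗ[ℝ] V,
          (∀ x : L, T ∘ₗ ρ x = ρ x ∘ₗ T) ∧
          ∀ g : c, (f g : L →ₗ[ℝ] V) = T ∘ₗ (g : L →ₗ[ℝ] V)) := by
  have hmem : ∀ v, γ₀ + ρ.flip v ∈ c := fun v => hc ▸ ⟨v, rfl⟩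
  have hγ₀ : γ₀ ∈ c := by simpa using hmem 0
  constructor
  · rintro ⟨F, htrans, heval⟩
    have hf : ∀ g : c, (f g : L →ₗ[ℝ] V) = F ∘ₗ g := fun g => LinearMap.ext (heval g)
    refine ⟨F, (LinearMap.comp_flip_eq_flip_apply_iff ρ F).1 fun v => ?_, hf⟩
    have h := htrans ⟨γ₀, hγ₀⟩ ⟨_, hmem v⟩ v rfl
    rw [hf, hf, LinearMap.comp_add] at h
    exact add_left_cancel h
  · rintro ⟨T, hT, hf⟩
    refine ⟨T, fun g₁ g₂ v hv => ?_, fun g x => by rw [hf g, LinearMap.comp_apply]⟩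
    rw [hf, hf, hv, LinearMap.comp_add, (LinearMap.comp_flip_eq_flip_apply_iff ρ T).2 hT v]

/-- Let `ρ` be a representation of `L` on `V` with no nonzero invariant vector,
and let `c`, `c'` be the cohomology classes of the 1-cocycles `γ₀`, `γ₀'`, each an affine
space modeled on `V` via `γ ↦ γ + ∂v`. A map `f : c → c'` is an affine equivariant map iff
it is of the form `γ ↦ T ∘ γ` for some linear `T : V → V` commuting with `ρ`. -/
theorem affine_equivariant_maps_between_cohomology_classes
    {L : Type*} [LieRing L] [LieAlgebra ℝ L]
    {V : Type*} [AddCommGroup V] [Module ℝ V]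
    (ρ : L →ₗ[ℝ] V →ₗ[ℝ] V)
    (hρ : ∀ x y : L, ρ ⁅x, y⁆ = ρ x ∘ₗ ρ y - ρ y ∘ₗ ρ x)
    (hinv : ∀ v : V, (∀ x : L, ρ x v = 0) → v = 0)
    (γ₀ γ₀' : L →ₗ[ℝ] V)
    (hγ₀ : ∀ x y : L, γ₀ ⁅x, y⁆ = ρ x (γ₀ y) - ρ y (γ₀ x))
    (hγ₀' : ∀ x y : L, γ₀' ⁅x, y⁆ = ρ x (γ₀' y) - ρ y (γ₀' x))
    (c c' : Set (L →ₗ[ℝ] V))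
    (hc : c = {γ | ∃ v : V, γ = γ₀ + ρ.flip v})
    (hc' : c' = {γ | ∃ v : V, γ = γ₀' + ρ.flip v})
    (f : c → c') :
    (∃ F : V →ₗ[ℝ] V,
        (∀ (g₁ g₂ : c) (v : V),
            (g₂ : L →ₗ[ℝ] V) = (g₁ : L →ₗ[ℝ] V) + ρ.flip v →
            (f g₂ : L →ₗ[ℝ] V) = (f g₁ : L →ₗ[ℝ] V) + ρ.flip (F v)) ∧
        (∀ (g : c) (x : L), (f g : L →ₗ[ℝ] V) x = F ((g : L →ₗ[ℝ] V) x)))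
      ↔ (∃ T : V →ₗ[ℝ] V,
          (∀ x : L, T ∘ₗ ρ x = ρ x ∘ₗ T) ∧
          ∀ g : c, (f g : L →ₗ[ℝ] V) = T ∘ₗ (g : L →ₗ[ℝ] V)) :=
  affine_equivariant_maps_between_cohomology_classes_general ρ γ₀ c c' hc f
end

section
/- Let 𝒜 be an affine space modeled on a real vector space A, B a real vector space, a₀, a₀' ∈ 𝒜, and p : 𝒜 → B a map such that p(a₀ + u) = Σ_{i=0}^k (1/i!) p_i(u, …, u) for all u ∈ A, where each p_i : A^i → B is symmetric i-linear. Then, setting w = a₀' −ᵥ a₀ and, for 0 ≤ j ≤ k, q_j(u₁, …, u_j) = Σ_{i=j}^k (1/(i−j)!) p_i(w, …, w, u₁, …, u_j) (with w occurring i−j times), each q_j is symmetric j-linear and p(a₀' + u) = Σ_{j=0}^k (1/j!) q_j(u, …, u) for all u ∈ A. -/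
/-- `frontPad w h u` is the vector `(w, …, w, u₁, …, u_j) : Fin i → A`, where `w` occupies
the first `i - j` slots. -/
def frontPad {A : Type*} (w : A) {i j : ℕ} (h : j ≤ i) (u : Fin j → A) : Fin i → A :=
  fun t => if ht : (t : ℕ) < i - j then w
    else u ⟨(t : ℕ) - (i - j), by have := t.isLt; omega⟩

section Perms
variable {i j n : ℕ}

def shiftFun (h : j ≤ i) (e : Equiv.Perm (Fin j)) : Fin i → Fin i :=
  fun t => if ht : (t : ℕ) < i - j then t
    else Fin.cast (by omega : j + (i - j) = i)
      ((e ⟨(t : ℕ) - (i - j), by have := t.isLt; omega⟩).addNat (i - j))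

lemma shiftFun_injective (h : j ≤ i) (e : Equiv.Perm (Fin j)) :
    Function.Injective (shiftFun h e) := by
  have key : ∀ (c : Fin i) (hc : ¬ (c : ℕ) < i - j), ((shiftFun h e c) : ℕ)
      = (e ⟨(c : ℕ) - (i - j), by have := c.isLt; omega⟩ : ℕ) + (i - j) := by
    intro c hc; simp [shiftFun, dif_neg hc]
  have key2 : ∀ c : Fin i, (c : ℕ) < i - j → shiftFun h e c = c := by
    intro c hc; simp [shiftFun, dif_pos hc]
  intro a b hab
  have hv := congrArg Fin.val hab
  by_cases ha : (a : ℕ) < i - j <;> by_cases hb : (b : ℕ) < i - j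
  · rw [key2 a ha, key2 b hb] at hab; exact hab
  · rw [key2 a ha] at hv; rw [key b hb] at hv; exfalso; omega
  · rw [key2 b hb] at hv; rw [key a ha] at hv; exfalso; omega
  · rw [key a ha, key b hb] at hv
    have heq : e ⟨(a : ℕ) - (i - j), by have := a.isLt; omega⟩
        = e ⟨(b : ℕ) - (i - j), by have := b.isLt; omega⟩ := Fin.ext (by omega)
    have hval := congrArg Fin.val (e.injective heq)
    simp only [Fin.val_mk] at hval
    exact Fin.ext (by omega)

noncomputable def shiftPerm (h : j ≤ i) (e : Equiv.Perm (Fin j)) : Equiv.Perm (Fin i) :=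
  Equiv.ofBijective _ (Finite.injective_iff_bijective.mp (shiftFun_injective h e))

lemma shiftPerm_apply (h : j ≤ i) (e : Equiv.Perm (Fin j)) (t : Fin i) :
    shiftPerm h e t = shiftFun h e t := rfl

lemma frontPad_comp_shiftPerm {A : Type*} (w : A) (h : j ≤ i) (e : Equiv.Perm (Fin j))
    (u : Fin j → A) :
    (fun t => frontPad w h u (shiftPerm h e t)) = frontPad w h (fun t => u (e t)) := by
  funext t
  rw [shiftPerm_apply]
  by_cases ht : (t : ℕ) < i - j
  · simp [frontPad, shiftFun, ht]
  · have hval : ((shiftFun h e t) : ℕ)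
        = (e ⟨(t : ℕ) - (i - j), by have := t.isLt; omega⟩ : ℕ) + (i - j) := by
      simp [shiftFun, dif_neg ht]
    have h2 : ¬ ((shiftFun h e t) : ℕ) < i - j := by omega
    simp only [frontPad, dif_neg ht, dif_neg h2]
    congr 1
    ext
    simp only [Fin.val_mk]
    omega

/-- a permutation carrying `S` onto `T`. -/
noncomputable def setPerm (S T : Finset (Fin n)) (hc : S.card = T.card) : Equiv.Perm (Fin n) :=
  (Equiv.sumCompl (· ∈ S)).symm.trans
    (((Finset.equivOfCardEq hc).sumCongr
      ((Equiv.subtypeEquivRight (fun x => (Finset.mem_compl (s := S)).symm)).trans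
        ((Finset.equivOfCardEq (by simp [Finset.card_compl, hc])).trans
          (Equiv.subtypeEquivRight (fun x => Finset.mem_compl (s := T)))))).trans
      (Equiv.sumCompl (· ∈ T)))

lemma setPerm_mem (S T : Finset (Fin n)) (hc : S.card = T.card) (x : Fin n) :
    setPerm S T hc x ∈ T ↔ x ∈ S := by
  by_cases hx : x ∈ S
  · have h1 : (Equiv.sumCompl (· ∈ S)).symm x = Sum.inl ⟨x, hx⟩ :=
      Equiv.sumCompl_symm_apply_of_pos hx
    simp only [setPerm, Equiv.trans_apply, h1, Equiv.sumCongr_apply, Sum.map_inl,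
      Equiv.sumCompl_apply_inl]
    simp [hx]
  · have h1 : (Equiv.sumCompl (· ∈ S)).symm x = Sum.inr ⟨x, hx⟩ :=
      Equiv.sumCompl_symm_apply_of_neg hx
    simp only [setPerm, Equiv.trans_apply, h1, Equiv.sumCongr_apply, Sum.map_inr,
      Equiv.sumCompl_apply_inr]
    exact iff_of_false
      (((Equiv.subtypeEquivRight (fun y => Finset.mem_compl (s := T)))
        ((Finset.equivOfCardEq (by simp [Finset.card_compl, hc]))
          ((Equiv.subtypeEquivRight (fun y => (Finset.mem_compl (s := S)).symm)) ⟨x, hx⟩))).prop)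
      hx

lemma piecewise_comp_setPerm {A : Type*} (S T : Finset (Fin n)) (hc : S.card = T.card)
    (a b : A) :
    (fun t => (T.piecewise (fun _ => a) (fun _ => b)) (setPerm S T hc t))
      = S.piecewise (fun _ => a) (fun _ => b) := by
  funext t
  simp only [Finset.piecewise]
  by_cases ht : t ∈ S
  · rw [if_pos ((setPerm_mem S T hc t).2 ht), if_pos ht]
  · rw [if_neg (fun hh => ht ((setPerm_mem S T hc t).1 hh)), if_neg ht]

/-- the "front" subset `{t : Fin i | t < c}` has cardinality `c`. -/
lemma card_front (h : j ≤ i) :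
    (Finset.filter (fun t : Fin i => (t : ℕ) < j) Finset.univ).card = j := by
  have : Finset.filter (fun t : Fin i => (t : ℕ) < j) Finset.univ
      = Finset.map (Fin.castLEEmb h) Finset.univ := by
    ext t
    simp only [Finset.mem_filter, Finset.mem_univ, true_and, Finset.mem_map]
    constructor
    · intro ht
      refine ⟨⟨(t : ℕ), ht⟩, ?_⟩
      ext; simp
    · rintro ⟨s, rfl⟩
      simpa using s.isLt
  rw [this, Finset.card_map, Finset.card_univ, Fintype.card_fin]

lemma frontPad_const' {A : Type*} (w u : A) {c : ℕ} (hci : c ≤ i) :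
    frontPad w (Nat.sub_le i c) (fun _ : Fin (i - c) => u)
      = (Finset.filter (fun t : Fin i => (t : ℕ) < c) Finset.univ).piecewise
          (fun _ => w) (fun _ => u) := by
  funext t
  simp only [frontPad, Finset.piecewise, Finset.mem_filter, Finset.mem_univ, true_and]
  by_cases ht : (t : ℕ) < c
  · rw [dif_pos (by omega), if_pos ht]
  · rw [dif_neg (by omega), if_neg ht]

lemma frontPad_const {A : Type*} (w u : A) (h : j ≤ i) :
    frontPad w h (fun _ : Fin j => u)
      = (Finset.filter (fun t : Fin i => (t : ℕ) < i - j) Finset.univ).piecewise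
          (fun _ => w) (fun _ => u) := by
  funext t
  by_cases ht : (t : ℕ) < i - j <;>
    simp [frontPad, Finset.piecewise, ht]

end Perms

section CB
variable {A : Type*} [AddCommGroup A] [Module ℝ A] {B : Type*} [AddCommGroup B] [Module ℝ B]

omit [AddCommGroup A] [Module ℝ A] in
lemma frontPad_update {w : A} {i j : ℕ} (h : j ≤ i) [DecidableEq (Fin j)] (u : Fin j → A)
    (s : Fin j) (x : A) :
    frontPad w h (Function.update u s x)
      = Function.update (frontPad w h u) ⟨i - j + (s : ℕ), by have := s.isLt; omega⟩ x := by
  funext t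
  by_cases ht : (t : ℕ) < i - j
  · have hne : t ≠ (⟨i - j + (s:ℕ), by have := s.isLt; omega⟩ : Fin i) := by
      intro hEq
      have := congrArg Fin.val hEq
      simp only [Fin.val_mk] at this; omega
    simp [frontPad, ht, Function.update_of_ne hne]
  · simp only [frontPad, dif_neg ht, Function.update_apply]
    have hcond : ((⟨(t:ℕ) - (i - j), by have := t.isLt; omega⟩ : Fin j) = s)
        ↔ (t = (⟨i - j + (s:ℕ), by have := s.isLt; omega⟩ : Fin i)) := by
      constructor <;> intro hEq <;> have := congrArg Fin.val hEq <;>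
        simp only [Fin.val_mk] at this <;> ext <;> simp only [Fin.val_mk] <;> omega
    by_cases hc : t = (⟨i - j + (s:ℕ), by have := s.isLt; omega⟩ : Fin i)
    · rw [if_pos (hcond.2 hc), if_pos hc]
    · rw [if_neg (fun hh => hc (hcond.1 hh)), if_neg hc]

/-- the multilinear map `u ↦ f (frontPad w h u)` -/
def padMap {i j : ℕ} (f : MultilinearMap ℝ (fun _ : Fin i => A) B) (w : A) (h : j ≤ i) :
    MultilinearMap ℝ (fun _ : Fin j => A) B where
  toFun u := f (frontPad w h u)
  map_update_add' {inst} u s x y := by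
    rw [frontPad_update h u s (x + y), frontPad_update h u s x, frontPad_update h u s y]
    exact f.map_update_add _ _ x y
  map_update_smul' {inst} u s c x := by
    rw [frontPad_update h u s (c • x), frontPad_update h u s x]
    exact f.map_update_smul _ _ c x

end CB


/-- Change of base point for polynomials on an affine space: if
`p(a₀ + u) = Σ_{i≤k} (1/i!) p_i(u,…,u)` with `p_i` symmetric `i`-linear, then setting
`w = a₀' −ᵥ a₀` and `q_j(u₁,…,u_j) = Σ_{i=j}^k (1/(i−j)!) p_i(w,…,w,u₁,…,u_j)`,
each `q_j` is symmetric `j`-linear and `p(a₀' + u) = Σ_{j≤k} (1/j!) q_j(u,…,u)`. -/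
theorem polynomial_change_of_base_point
    {A : Type*} [AddCommGroup A] [Module ℝ A]
    {𝒜 : Type*} [AddTorsor A 𝒜]
    {B : Type*} [AddCommGroup B] [Module ℝ B]
    (k : ℕ) (a₀ a₀' : 𝒜) (p : 𝒜 → B)
    (pC : ∀ i : ℕ, MultilinearMap ℝ (fun _ : Fin i => A) B)
    (hsym : ∀ (i : ℕ) (e : Equiv.Perm (Fin i)) (u : Fin i → A),
        pC i (fun t => u (e t)) = pC i u)
    (hp : ∀ u : A,
        p (u +ᵥ a₀) = ∑ i ∈ Finset.range (k + 1), (i.factorial : ℝ)⁻¹ • pC i (fun _ => u)) :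
    ∃ qC : ∀ j : ℕ, MultilinearMap ℝ (fun _ : Fin j => A) B,
      (∀ (j : ℕ) (e : Equiv.Perm (Fin j)) (u : Fin j → A),
          qC j (fun t => u (e t)) = qC j u) ∧
      (∀ (j : ℕ) (u : Fin j → A),
          qC j u = ∑ i ∈ Finset.Icc j k,
            if h : j ≤ i then ((i - j).factorial : ℝ)⁻¹ • pC i (frontPad (a₀' -ᵥ a₀) h u)
            else 0) ∧
      (∀ u : A,
          p (u +ᵥ a₀') = ∑ j ∈ Finset.range (k + 1), (j.factorial : ℝ)⁻¹ • qC j (fun _ => u)) := by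
  set w : A := a₀' -ᵥ a₀ with hw
  refine ⟨fun j => ∑ i ∈ Finset.Icc j k,
      if h : j ≤ i then ((i - j).factorial : ℝ)⁻¹ • padMap (pC i) w h else 0, ?_, ?_, ?_⟩
  · -- symmetry
    intro j e u
    rw [MultilinearMap.sum_apply, MultilinearMap.sum_apply]
    refine Finset.sum_congr rfl (fun i hi => ?_)
    by_cases h : j ≤ i
    · simp only [dif_pos h, MultilinearMap.smul_apply]
      congr 1
      show (pC i) (frontPad w h (fun t => u (e t))) = (pC i) (frontPad w h u)
      rw [← frontPad_comp_shiftPerm w h e u, hsym i (shiftPerm h e) (frontPad w h u)]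
    · simp [dif_neg h]
  · -- formula
    intro j u
    rw [MultilinearMap.sum_apply]
    refine Finset.sum_congr rfl (fun i hi => ?_)
    by_cases h : j ≤ i
    · simp only [dif_pos h, MultilinearMap.smul_apply]
      rfl
    · simp [dif_neg h]
  · -- expansion
    intro u
    have ha : u +ᵥ a₀' = (w + u) +ᵥ a₀ := by
      conv_lhs => rw [← vsub_vadd a₀' a₀, vadd_vadd]
      rw [add_comm]
    -- the building blocks
    set G : ℕ → ℕ → B := fun i j =>
      if h : j ≤ i then pC i (frontPad w h (fun _ : Fin j => u)) else 0 with hG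
    -- step 1 : binomial expansion of each pC i at w + u
    have step1 : ∀ i : ℕ, pC i (fun _ : Fin i => w + u)
        = ∑ c ∈ Finset.range (i + 1), (i.choose c) • G i (i - c) := by
      intro i
      have h0 : (fun _ : Fin i => w + u) = (fun _ : Fin i => w) + (fun _ : Fin i => u) := rfl
      rw [h0, MultilinearMap.map_add_univ, ← Finset.powerset_univ, Finset.sum_powerset,
        Finset.card_univ, Fintype.card_fin]
      refine Finset.sum_congr rfl (fun c hc => ?_)
      have hci : c ≤ i := by have := Finset.mem_range.mp hc; omega
      have hterm : ∀ s ∈ Finset.powersetCard c (Finset.univ : Finset (Fin i)),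
          pC i (s.piecewise (fun _ => w) (fun _ => u)) = G i (i - c) := by
        intro s hs
        have hcard : s.card = c := (Finset.mem_powersetCard.mp hs).2
        have hfcard : (Finset.filter (fun t : Fin i => (t : ℕ) < c) Finset.univ).card
            = s.card := by rw [card_front hci, hcard]
        have h2 : pC i ((Finset.filter (fun t : Fin i => (t : ℕ) < c)
              Finset.univ).piecewise (fun _ => w) (fun _ => u))
            = pC i (s.piecewise (fun _ => w) (fun _ => u)) := by
          rw [← piecewise_comp_setPerm _ _ hfcard w u]
          exact hsym i (setPerm _ _ hfcard) _
        rw [← h2, hG]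
        dsimp only
        have hji : i - c ≤ i := Nat.sub_le i c
        rw [dif_pos hji]
        congr 1
        exact (frontPad_const' w u hci).symm
      rw [Finset.sum_congr rfl hterm, Finset.sum_const, Finset.card_powersetCard,
        Finset.card_univ, Fintype.card_fin]
    -- step 2 : reflect the inner sum
    have step2 : ∀ i : ℕ, ∑ c ∈ Finset.range (i + 1), (i.choose c) • G i (i - c)
        = ∑ j ∈ Finset.range (i + 1), (i.choose j) • G i j := by
      intro i
      rw [← Finset.sum_range_reflect (fun c => (i.choose c) • G i (i - c)) (i + 1)]
      refine Finset.sum_congr rfl (fun j hj => ?_)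
      have hji : j ≤ i := by have := Finset.mem_range.mp hj; omega
      rw [show i + 1 - 1 - j = i - j from by omega, Nat.sub_sub_self hji,
        Nat.choose_symm hji]
    -- combine
    rw [ha, hp (w + u)]
    have main1 : ∑ i ∈ Finset.range (k + 1), (i.factorial : ℝ)⁻¹ • pC i (fun _ => w + u)
        = ∑ i ∈ Finset.range (k + 1), ∑ j ∈ Finset.range (i + 1),
            ((j.factorial : ℝ)⁻¹ * ((i - j).factorial : ℝ)⁻¹) • G i j := by
      refine Finset.sum_congr rfl (fun i hi => ?_)
      rw [step1 i, step2 i, Finset.smul_sum]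
      refine Finset.sum_congr rfl (fun j hj => ?_)
      have hji : j ≤ i := by have := Finset.mem_range.mp hj; omega
      rw [← Nat.cast_smul_eq_nsmul ℝ, smul_smul]
      congr 1
      have hfac : ((i.choose j : ℝ)) * (j.factorial : ℝ) * ((i - j).factorial : ℝ)
          = (i.factorial : ℝ) := by
        exact_mod_cast congrArg (Nat.cast : ℕ → ℝ)
          (Nat.choose_mul_factorial_mul_factorial hji)
      have h1 : (j.factorial : ℝ) ≠ 0 := Nat.cast_ne_zero.mpr (Nat.factorial_ne_zero j)
      have h2 : ((i - j).factorial : ℝ) ≠ 0 :=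
        Nat.cast_ne_zero.mpr (Nat.factorial_ne_zero (i - j))
      have h3 : (i.factorial : ℝ) ≠ 0 := Nat.cast_ne_zero.mpr (Nat.factorial_ne_zero i)
      field_simp
      linear_combination hfac
    rw [main1]
    rw [Finset.sum_comm' (t := fun i => Finset.range (i + 1))
      (s' := fun j => Finset.Icc j k) (t' := Finset.range (k + 1))
      (by intro x y; simp only [Finset.mem_range, Finset.mem_Icc]; omega)]
    refine Finset.sum_congr rfl (fun j hj => ?_)
    rw [MultilinearMap.sum_apply, Finset.smul_sum]
    refine Finset.sum_congr rfl (fun i hi => ?_)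
    have hji : j ≤ i := (Finset.mem_Icc.mp hi).1
    rw [dif_pos hji, hG]
    dsimp only
    rw [dif_pos hji, MultilinearMap.smul_apply, mul_smul]
    rfl
end

section
/- Let L be a real Lie algebra, 𝒜 an affine representation of L modeled on a real vector space A, and (W, σ) a representation of L. Let p : 𝒜 → W be a polynomial of degree ≤ k with components (p_i) relative to a₀ ∈ 𝒜 and components (q_i) relative to a₀' ∈ 𝒜. Fix x ∈ L. Define P : 𝒜 → W as the polynomial whose components relative to a₀ are r_i(u₁,…,u_i) = σ(x)(p_i(u₁,…,u_i)) − Σ_{j=1}^i p_i(u₁,…,x⃗(u_j),…,u_i) − p_{i+1}(x·a₀, u₁,…,u_i) (with p_{k+1} = 0), and define Q : 𝒜 → W analogously from the components q_i relative to a₀'. Then P = Q as functions from 𝒜 to W. -/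
/-!
Relative to a base point `a₀`, with `u = a -ᵥ a₀`, the components of `x·p` sum to
`σ(x)(p a) − D p(a)[x·a₀ + x⃗ u]`, where `D p(a)[v]` is the coefficient of `t` in
`t ↦ p(t • v +ᵥ a)`: by symmetry each `p_{i+1}(x·a₀, u, …, u)` is the average of the `i + 1` insertions of `x·a₀`, so
these terms join the `x⃗ u` terms into one directional derivative. By affineness the direction is
`x·a`, and a polynomial in `t` over `ℝ` determines its coefficients, so `D p(a)[x·a]` depends only
on the function `p`.
-/

/-- Components of the polynomial `x·p` built from components `p` relative to a base point:
`(x·p)_i(u₁,…,u_i) = σx(p_i(u₁,…,u_i)) − Σ_j p_i(u₁,…,linx(u_j),…,u_i) − p_{i+1}(c,u₁,…,u_i)`,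
where `c = x·a₀`. -/
def actedPolyComp {A W : Type*} [AddCommGroup A] [Module ℝ A] [AddCommGroup W] [Module ℝ W]
    (σx : W →ₗ[ℝ] W) (linx : A →ₗ[ℝ] A) (c : A)
    (p : ∀ i : ℕ, (Fin i → A) → W) : ∀ i : ℕ, (Fin i → A) → W :=
  fun i u =>
    σx (p i u) - (∑ j : Fin i, p i (Function.update u j (linx (u j)))) - p (i + 1) (Fin.cons c u)

/-- The polynomial on the affine space `𝒜` with components `p` (relative to `a₀`) up to
degree `k`: `a ↦ Σ_{i≤k} (1/i!) p_i(a −ᵥ a₀, …, a −ᵥ a₀)`. -/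
noncomputable def polyFromComp {A W 𝒜 : Type*} [AddCommGroup A] [Module ℝ A]
    [AddCommGroup W] [Module ℝ W] [AddTorsor A 𝒜]
    (a₀ : 𝒜) (k : ℕ) (p : ∀ i : ℕ, (Fin i → A) → W) : 𝒜 → W :=
  fun a => ∑ i ∈ Finset.range (k + 1), (i.factorial : ℝ)⁻¹ • p i (fun _ => a -ᵥ a₀)

open Finset Function

theorem eq_of_forall_sum_pow_smul_eq {K V : Type*} [Field K] [Infinite K]
    [AddCommGroup V] [Module K V] {N : ℕ} {w w' : ℕ → V}
    (h : ∀ t : K, ∑ n ∈ range N, t ^ n • w n = ∑ n ∈ range N, t ^ n • w' n)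
    {n : ℕ} (hn : n < N) : w n = w' n := by
  rw [← sub_eq_zero, ← Module.forall_dual_apply_eq_zero_iff K]
  intro φ
  let P : (ℕ → V) → Polynomial K := fun w => ∑ m ∈ range N, .C (φ (w m)) * .X ^ m
  have hP : P w = P w' := Polynomial.funext fun t => by
    simp only [P, Polynomial.eval_finsetSum, Polynomial.eval_mul, Polynomial.eval_C,
      Polynomial.eval_pow, Polynomial.eval_X]
    simpa only [map_sum, map_smul, smul_eq_mul, mul_comm] using congrArg φ (h t)
  have := congrArg (Polynomial.coeff · n) hP
  simpa [P, Polynomial.finsetSum_coeff, Polynomial.coeff_C_mul_X_pow, hn, sub_eq_zero] using this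

namespace MultilinearMap

variable {R M N ι : Type*} [CommSemiring R] [AddCommMonoid M] [Module R M]
  [AddCommMonoid N] [Module R N]

theorem map_const_smul_add [Fintype ι] [DecidableEq ι]
    (f : MultilinearMap R (fun _ : ι => M) N) (t : R) (v u : M) {d : ℕ}
    (hd : Fintype.card ι < d) :
    f (fun _ => t • v + u) =
      ∑ n ∈ Finset.range d,
        t ^ n • ∑ s ∈ powersetCard n univ, f (s.piecewise (fun _ => v) fun _ => u) := by
  rw [show (fun _ : ι => t • v + u) = (fun _ => t • v) + fun _ => u from rfl, map_add_univ,
    ← powerset_univ, sum_powerset, card_univ]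
  refine (sum_subset (range_subset_range.2 hd) fun n _ hn => ?_).trans
    (sum_congr rfl fun n _ => ?_)
  · rw [powersetCard_eq_empty.2 (by simpa using hn), sum_empty]
  · rw [smul_sum]
    refine sum_congr rfl fun s hs => ?_
    rw [← (mem_powersetCard.1 hs).2, ← prod_const, ← map_piecewise_smul]
    congr 1
    ext i
    by_cases hi : i ∈ s <;> simp [hi]

theorem sum_update_const_eq_nsmul_cons {m : ℕ}
    (f : MultilinearMap R (fun _ : Fin (m + 1) => M) N)
    (hf : ∀ (e : Equiv.Perm (Fin (m + 1))) (u : Fin (m + 1) → M), f (fun t => u (e t)) = f u)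
    (u c : M) :
    ∑ j, f (update (fun _ => u) j c) = (m + 1) • f (Fin.cons c fun _ => u) := by
  have hterm : ∀ j, f (update (fun _ => u) j c) = f (Fin.cons c fun _ => u) := by
    intro j
    calc f (update (fun _ => u) j c)
        = f (update (fun _ => u) 0 c ∘ Equiv.swap 0 j) := by
          rw [update_comp_equiv]; simp [comp_def]
      _ = f (update (fun _ => u) 0 c) := hf _ _
      _ = f (Fin.cons c fun _ => u) := by
          congr 1
          ext i
          refine Fin.cases ?_ (fun s => ?_) i <;> simp
  simp [hterm]

end MultilinearMap

section PolyFromComp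

variable {A W 𝒜 : Type*} [AddCommGroup A] [Module ℝ A] [AddCommGroup W] [Module ℝ W]
  [AddTorsor A 𝒜]

theorem eq_polyFromComp_of_vadd {p : 𝒜 → W} {a₀ : 𝒜} {k : ℕ} {P : ∀ i : ℕ, (Fin i → A) → W}
    (hp : ∀ u : A, p (u +ᵥ a₀) = ∑ i ∈ range (k + 1), (i.factorial : ℝ)⁻¹ • P i fun _ => u) :
    p = polyFromComp a₀ k P :=
  funext fun a => by rw [polyFromComp, ← hp, vsub_vadd]

noncomputable def lineCoeffFromComp (a₀ : 𝒜) (k : ℕ)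
    (pC : ∀ i : ℕ, MultilinearMap ℝ (fun _ : Fin i => A) W) (a : 𝒜) (v : A) (n : ℕ) : W :=
  ∑ i ∈ range (k + 1), (i.factorial : ℝ)⁻¹ •
    ∑ s ∈ powersetCard n univ, pC i (s.piecewise (fun _ => v) fun _ => a -ᵥ a₀)

theorem polyFromComp_smul_vadd (a₀ : 𝒜) (k : ℕ)
    (pC : ∀ i : ℕ, MultilinearMap ℝ (fun _ : Fin i => A) W) (a : 𝒜) (v : A) (t : ℝ)
    {d : ℕ} (hd : k < d) :
    polyFromComp a₀ k (fun i u => pC i u) (t • v +ᵥ a) =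
      ∑ n ∈ range d, t ^ n • lineCoeffFromComp a₀ k pC a v n := by
  simp only [polyFromComp, lineCoeffFromComp, vadd_vsub_assoc, smul_sum]
  rw [sum_comm]
  refine sum_congr rfl fun i hi => ?_
  rw [(pC i).map_const_smul_add t v _ (d := d) (by simpa using (mem_range.1 hi).trans_le hd),
    smul_sum]
  refine sum_congr rfl fun n _ => ?_
  rw [smul_comm]
  simp only [smul_sum]

noncomputable def dirDerivFromComp (a₀ : 𝒜) (k : ℕ)
    (pC : ∀ i : ℕ, MultilinearMap ℝ (fun _ : Fin i => A) W) (a : 𝒜) (v : A) : W :=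
  ∑ i ∈ range (k + 1), (i.factorial : ℝ)⁻¹ • ∑ j : Fin i, pC i (update (fun _ => a -ᵥ a₀) j v)

theorem lineCoeffFromComp_one (a₀ : 𝒜) (k : ℕ)
    (pC : ∀ i : ℕ, MultilinearMap ℝ (fun _ : Fin i => A) W) (a : 𝒜) (v : A) :
    lineCoeffFromComp a₀ k pC a v 1 = dirDerivFromComp a₀ k pC a v := by
  simp only [lineCoeffFromComp, dirDerivFromComp, powersetCard_one, sum_map,
    Embedding.coeFn_mk, piecewise_singleton]

theorem dirDerivFromComp_eq_of_polyFromComp_eq {a₀ a₀' : 𝒜} {k : ℕ}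
    {pC qC : ∀ i : ℕ, MultilinearMap ℝ (fun _ : Fin i => A) W}
    (h : polyFromComp a₀ k (fun i u => pC i u) = polyFromComp a₀' k (fun i u => qC i u))
    (a : 𝒜) (v : A) :
    dirDerivFromComp a₀ k pC a v = dirDerivFromComp a₀' k qC a v := by
  rw [← lineCoeffFromComp_one, ← lineCoeffFromComp_one]
  refine eq_of_forall_sum_pow_smul_eq (K := ℝ) (fun t => ?_) (by omega : 1 < k + 2)
  have hd : k < k + 2 := by omega
  rw [← polyFromComp_smul_vadd _ _ _ _ _ _ hd, ← polyFromComp_smul_vadd _ _ _ _ _ _ hd, h]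

theorem dirDerivFromComp_add (a₀ : 𝒜) (k : ℕ)
    (pC : ∀ i : ℕ, MultilinearMap ℝ (fun _ : Fin i => A) W) (a : 𝒜) (v w : A) :
    dirDerivFromComp a₀ k pC a (v + w) =
      dirDerivFromComp a₀ k pC a v + dirDerivFromComp a₀ k pC a w := by
  simp only [dirDerivFromComp, MultilinearMap.map_update_add, sum_add_distrib, smul_add]

theorem dirDerivFromComp_eq_sum_cons (a₀ : 𝒜) (k : ℕ)
    (pC : ∀ i : ℕ, MultilinearMap ℝ (fun _ : Fin i => A) W)
    (hpsym : ∀ (i : ℕ) (e : Equiv.Perm (Fin i)) (u : Fin i → A),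
        pC i (fun t => u (e t)) = pC i u)
    (hptrunc : pC (k + 1) = 0) (a : 𝒜) (c : A) :
    dirDerivFromComp a₀ k pC a c =
      ∑ i ∈ range (k + 1), (i.factorial : ℝ)⁻¹ • pC (i + 1) (Fin.cons c fun _ => a -ᵥ a₀) := by
  rw [dirDerivFromComp, sum_range_succ', sum_range_succ, hptrunc]
  simp only [univ_eq_empty, sum_empty, smul_zero, add_zero, zero_apply]
  refine sum_congr rfl fun m _ => ?_
  rw [(pC (m + 1)).sum_update_const_eq_nsmul_cons (hpsym _), ← Nat.cast_smul_eq_nsmul ℝ, smul_smul]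
  congr 1
  rw [Nat.factorial_succ]
  push_cast
  field_simp

theorem polyFromComp_actedPolyComp (σx : W →ₗ[ℝ] W) (linx : A →ₗ[ℝ] A) (c : A) (a₀ : 𝒜) (k : ℕ)
    (pC : ∀ i : ℕ, MultilinearMap ℝ (fun _ : Fin i => A) W)
    (hpsym : ∀ (i : ℕ) (e : Equiv.Perm (Fin i)) (u : Fin i → A),
        pC i (fun t => u (e t)) = pC i u)
    (hptrunc : pC (k + 1) = 0) (a : 𝒜) :
    polyFromComp a₀ k (actedPolyComp σx linx c fun i u => pC i u) a =
      σx (polyFromComp a₀ k (fun i u => pC i u) a) -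
        dirDerivFromComp a₀ k pC a (c + linx (a -ᵥ a₀)) := by
  rw [dirDerivFromComp_add, dirDerivFromComp_eq_sum_cons a₀ k pC hpsym hptrunc]
  simp only [polyFromComp, actedPolyComp, dirDerivFromComp, map_sum, map_smul, smul_sub,
    sum_sub_distrib]
  abel

end PolyFromComp

theorem action_on_polynomials_independent_of_base_point_general
    {L : Type*} [LieRing L] [LieAlgebra ℝ L]
    {A : Type*} [AddCommGroup A] [Module ℝ A]
    {𝒜 : Type*} [AddTorsor A 𝒜]
    {W : Type*} [AddCommGroup W] [Module ℝ W]
    (act : L → 𝒜 → A) (lin : L → A →ₗ[ℝ] A)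
    (haff : ∀ (x : L) (u : A) (a : 𝒜), act x (u +ᵥ a) = act x a + lin x u)
    (σ : L →ₗ[ℝ] W →ₗ[ℝ] W)
    (k : ℕ) (a₀ a₀' : 𝒜) (p : 𝒜 → W)
    (pC qC : ∀ i : ℕ, MultilinearMap ℝ (fun _ : Fin i => A) W)
    (hpsym : ∀ (i : ℕ) (e : Equiv.Perm (Fin i)) (u : Fin i → A),
        pC i (fun t => u (e t)) = pC i u)
    (hqsym : ∀ (i : ℕ) (e : Equiv.Perm (Fin i)) (u : Fin i → A),
        qC i (fun t => u (e t)) = qC i u)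
    (hptrunc : pC (k + 1) = 0) (hqtrunc : qC (k + 1) = 0)
    (hp : ∀ u : A,
        p (u +ᵥ a₀) = ∑ i ∈ Finset.range (k + 1), (i.factorial : ℝ)⁻¹ • pC i (fun _ => u))
    (hq : ∀ u : A,
        p (u +ᵥ a₀') = ∑ i ∈ Finset.range (k + 1), (i.factorial : ℝ)⁻¹ • qC i (fun _ => u))
    (x : L) :
    ∀ a : 𝒜,
      polyFromComp a₀ k
          (actedPolyComp (σ x) (lin x) (act x a₀) (fun i (u : Fin i → A) => pC i u)) a
        = polyFromComp a₀' k
            (actedPolyComp (σ x) (lin x) (act x a₀') (fun i (u : Fin i → A) => qC i u)) a := by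
  intro a
  have hp' : p = polyFromComp a₀ k fun i u => pC i u := eq_polyFromComp_of_vadd hp
  have hq' : p = polyFromComp a₀' k fun i u => qC i u := eq_polyFromComp_of_vadd hq
  have hact (b : 𝒜) : act x a = act x b + lin x (a -ᵥ b) := by
    rw [← haff, vsub_vadd]
  rw [polyFromComp_actedPolyComp _ _ _ _ _ _ hpsym hptrunc,
    polyFromComp_actedPolyComp _ _ _ _ _ _ hqsym hqtrunc, ← hact, ← hact, ← hp', ← hq',
    dirDerivFromComp_eq_of_polyFromComp_eq (hp'.symm.trans hq')]

/-- The polynomial `x·p`, defined via components relative to a base point,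
does not depend on the base point: computing it from the components of `p` relative to `a₀`
or relative to `a₀'` yields the same function `𝒜 → W`. -/
theorem action_on_polynomials_independent_of_base_point
    {L : Type*} [LieRing L] [LieAlgebra ℝ L]
    {A : Type*} [AddCommGroup A] [Module ℝ A]
    {𝒜 : Type*} [AddTorsor A 𝒜]
    {W : Type*} [AddCommGroup W] [Module ℝ W]
    (act : L → 𝒜 → A) (lin : L → A →ₗ[ℝ] A)
    (hadd : ∀ (x y : L) (a : 𝒜), act (x + y) a = act x a + act y a)
    (hsmul : ∀ (r : ℝ) (x : L) (a : 𝒜), act (r • x) a = r • act x a)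
    (haff : ∀ (x : L) (u : A) (a : 𝒜), act x (u +ᵥ a) = act x a + lin x u)
    (hcoc : ∀ (x y : L) (a : 𝒜), lin x (act y a) - lin y (act x a) - act ⁅x, y⁆ a = 0)
    (σ : L →ₗ[ℝ] W →ₗ[ℝ] W)
    (hσ : ∀ x y : L, σ ⁅x, y⁆ = σ x ∘ₗ σ y - σ y ∘ₗ σ x)
    (k : ℕ) (a₀ a₀' : 𝒜) (p : 𝒜 → W)
    (pC qC : ∀ i : ℕ, MultilinearMap ℝ (fun _ : Fin i => A) W)
    (hpsym : ∀ (i : ℕ) (e : Equiv.Perm (Fin i)) (u : Fin i → A),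
        pC i (fun t => u (e t)) = pC i u)
    (hqsym : ∀ (i : ℕ) (e : Equiv.Perm (Fin i)) (u : Fin i → A),
        qC i (fun t => u (e t)) = qC i u)
    (hptrunc : pC (k + 1) = 0) (hqtrunc : qC (k + 1) = 0)
    (hp : ∀ u : A,
        p (u +ᵥ a₀) = ∑ i ∈ Finset.range (k + 1), (i.factorial : ℝ)⁻¹ • pC i (fun _ => u))
    (hq : ∀ u : A,
        p (u +ᵥ a₀') = ∑ i ∈ Finset.range (k + 1), (i.factorial : ℝ)⁻¹ • qC i (fun _ => u))
    (x : L) :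
    ∀ a : 𝒜,
      polyFromComp a₀ k
          (actedPolyComp (σ x) (lin x) (act x a₀) (fun i (u : Fin i → A) => pC i u)) a
        = polyFromComp a₀' k
            (actedPolyComp (σ x) (lin x) (act x a₀') (fun i (u : Fin i → A) => qC i u)) a :=
  action_on_polynomials_independent_of_base_point_general act lin haff σ k a₀ a₀' p pC qC hpsym
    hqsym hptrunc hqtrunc hp hq x
end

section
/- Let L be a real Lie algebra, 𝒜 an affine representation of L modeled on a real vector space A, and (W, σ) a representation of L. For a polynomial p : 𝒜 → W of degree ≤ k with components (p_i) relative to a fixed a₀ ∈ 𝒜 and for x ∈ L, let x·p denote the polynomial of degree ≤ k whose components relative to a₀ are (x·p)_i(u₁,…,u_i) = σ(x)(p_i(u₁,…,u_i)) − Σ_{j=1}^i p_i(u₁,…,x⃗(u_j),…,u_i) − p_{i+1}(x·a₀, u₁,…,u_i) (with p_{k+1} = 0). Then this operation is a representation of L on the space of polynomials of degree ≤ k: for all x, y ∈ L and all such p, x·(y·p) − y·(x·p) = [x,y]·p as functions from 𝒜 to W. -/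
/-!
Componentwise, `p ↦ x·p` is `σ x − D_{x⃗} − ι_{x·a₀}`, where `D_T` lets `T ∈ End A` act as a
derivation on the arguments of the `p_i` and `ι_c` inserts `c` as first argument of `p_{i+1}`.
The bracket of the operators of `x` and `y` is computed term by term: `σ` commutes with `D` and
`ι`; `[D_S, D_T] = −D_{[S,T]}`; the two contractions commute because the `p_i` are symmetric;
and `[D_S, ι_c] = −ι_{S c}`, so the mixed terms combine to `−ι_c` with
`c = x⃗(y·a₀) − y⃗(x·a₀) = [x,y]·a₀` by the cocycle identity. The same identity at `u +ᵥ a₀`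
minus the one at `a₀` gives `[x,y]⃗ = [x⃗, y⃗]`.
-/

open Function

section

variable {A W : Type*} [AddCommGroup W]

theorem sum_sum_update_update_sub_sum_sum_update_update {ι : Type*} [Fintype ι] [DecidableEq ι]
    (f : (ι → A) → W) (Lx Ly : A → A) (u : ι → A) :
    (∑ j, ∑ m, f (update (update u j (Lx (u j))) m (Ly (update u j (Lx (u j)) m))))
      - (∑ j, ∑ m, f (update (update u j (Ly (u j))) m (Lx (update u j (Ly (u j)) m))))
      = (∑ j, f (update u j (Ly (Lx (u j))))) - ∑ j, f (update u j (Lx (Ly (u j)))) := by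
  rw [Finset.sum_comm (f := fun j m =>
    f (update (update u j (Ly (u j))) m (Lx (update u j (Ly (u j)) m)))),
    ← Finset.sum_sub_distrib, ← Finset.sum_sub_distrib]
  refine Finset.sum_congr rfl fun j _ => ?_
  rw [← Finset.sum_sub_distrib, Finset.sum_eq_single j]
  · simp only [update_self, update_idem]
  · intro m _ hm
    rw [update_of_ne hm, update_of_ne (Ne.symm hm), update_comm hm, sub_self]
  · simp

theorem Fin.sum_update_cons {n : ℕ} (f : (Fin (n + 1) → A) → W) (L : A → A) (c : A)
    (u : Fin n → A) :
    ∑ m, f (update (Fin.cons c u : Fin (n + 1) → A) m (L ((Fin.cons c u : Fin (n + 1) → A) m)))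
      = f (Fin.cons (L c) u) + ∑ j, f (Fin.cons c (update u j (L (u j)))) := by
  simp [Fin.sum_univ_succ, Fin.update_cons_zero, ← Fin.cons_update]

end

theorem map_cons_cons_comm {A W : Type*} {n : ℕ} (f : (Fin (n + 2) → A) → W)
    (hf : ∀ v, f (v ∘ Equiv.swap 0 1) = f v) (a b : A) (u : Fin n → A) :
    f (Fin.cons a (Fin.cons b u)) = f (Fin.cons b (Fin.cons a u)) := by
  rw [← hf]
  exact congrArg f (Matrix.cons_cons_comp_swap_zero_one a b u)

theorem MultilinearMap.map_cons_sub {R A W : Type*} [CommRing R] [AddCommGroup A] [Module R A]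
    [AddCommGroup W] [Module R W] {n : ℕ} (f : MultilinearMap R (fun _ : Fin (n + 1) => A) W)
    (a b : A) (u : Fin n → A) :
    f (Fin.cons (a - b) u) = f (Fin.cons a u) - f (Fin.cons b u) := by
  simpa only [LinearMap.sub_apply, sub_apply, f.curryLeft_apply] using
    congrArg (· u) (map_sub f.curryLeft a b)

theorem actedPolyComp_sub_actedPolyComp {A W : Type*} [AddCommGroup A] [Module ℝ A]
    [AddCommGroup W] [Module ℝ W] (σx σy : W →ₗ[ℝ] W) (Lx Ly : A →ₗ[ℝ] A) (cx cy : A)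
    (p : ∀ n : ℕ, MultilinearMap ℝ (fun _ : Fin n => A) W)
    (i : ℕ) (hswap : ∀ v : Fin (i + 2) → A, p (i + 2) (v ∘ Equiv.swap 0 1) = p (i + 2) v)
    (u : Fin i → A) :
    actedPolyComp σx Lx cx (actedPolyComp σy Ly cy (fun n v => p n v)) i u
      - actedPolyComp σy Ly cy (actedPolyComp σx Lx cx (fun n v => p n v)) i u
      = actedPolyComp (σx ∘ₗ σy - σy ∘ₗ σx) (Lx ∘ₗ Ly - Ly ∘ₗ Lx) (Lx cy - Ly cx)
          (fun n v => p n v) i u := by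
  have hderiv := sum_sum_update_update_sub_sum_sum_update_update (p i) Lx Ly u
  have hcomm : ∑ j, p i (update u j (Lx (Ly (u j)) - Ly (Lx (u j))))
      = ∑ j, p i (update u j (Lx (Ly (u j)))) - ∑ j, p i (update u j (Ly (Lx (u j)))) := by
    rw [← Finset.sum_sub_distrib]
    exact Finset.sum_congr rfl fun j _ => (p i).map_update_sub u j _ _
  simp only [actedPolyComp, map_sub, map_sum, Finset.sum_sub_distrib, LinearMap.sub_apply,
    LinearMap.comp_apply, Fin.sum_update_cons, (p (i + 1)).map_cons_sub,
    map_cons_cons_comm (p (i + 2)) hswap cy cx u, hcomm]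
  rw [sub_eq_iff_eq_add.mp hderiv]
  abel

theorem lin_lie_eq_of_affine_cocycle {L A 𝒜 : Type*} [Bracket L L] [AddCommGroup A] [Module ℝ A]
    [AddTorsor A 𝒜] (act : L → 𝒜 → A) (lin : L → A →ₗ[ℝ] A)
    (haff : ∀ (x : L) (u : A) (a : 𝒜), act x (u +ᵥ a) = act x a + lin x u)
    (hcoc : ∀ (x y : L) (a : 𝒜), lin x (act y a) - lin y (act x a) - act ⁅x, y⁆ a = 0)
    (x y : L) : lin ⁅x, y⁆ = lin x ∘ₗ lin y - lin y ∘ₗ lin x := by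
  obtain ⟨a⟩ := (inferInstance : Nonempty 𝒜)
  ext u
  have hu := hcoc x y (u +ᵥ a)
  rw [haff, haff, haff, map_add, map_add, ← sub_eq_zero.mp (hcoc x y a)] at hu
  rw [LinearMap.sub_apply, LinearMap.comp_apply, LinearMap.comp_apply]
  linear_combination (norm := module) -hu

theorem action_on_polynomials_is_representation_general
    {L : Type*} [LieRing L] [LieAlgebra ℝ L]
    {A : Type*} [AddCommGroup A] [Module ℝ A]
    {𝒜 : Type*} [AddTorsor A 𝒜]
    {W : Type*} [AddCommGroup W] [Module ℝ W]
    (act : L → 𝒜 → A) (lin : L → A →ₗ[ℝ] A)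
    (haff : ∀ (x : L) (u : A) (a : 𝒜), act x (u +ᵥ a) = act x a + lin x u)
    (hcoc : ∀ (x y : L) (a : 𝒜), lin x (act y a) - lin y (act x a) - act ⁅x, y⁆ a = 0)
    (σ : L →ₗ[ℝ] W →ₗ[ℝ] W)
    (hσ : ∀ x y : L, σ ⁅x, y⁆ = σ x ∘ₗ σ y - σ y ∘ₗ σ x)
    (k : ℕ) (a₀ : 𝒜)
    (pC : ∀ i : ℕ, MultilinearMap ℝ (fun _ : Fin i => A) W)
    (hpsym : ∀ (i : ℕ) (e : Equiv.Perm (Fin i)) (u : Fin i → A),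
        pC i (fun t => u (e t)) = pC i u) :
    ∀ (x y : L) (a : 𝒜),
      polyFromComp a₀ k
          (actedPolyComp (σ x) (lin x) (act x a₀)
            (actedPolyComp (σ y) (lin y) (act y a₀) (fun i (u : Fin i → A) => pC i u))) a
        - polyFromComp a₀ k
            (actedPolyComp (σ y) (lin y) (act y a₀)
              (actedPolyComp (σ x) (lin x) (act x a₀) (fun i (u : Fin i → A) => pC i u))) a
        = polyFromComp a₀ k
            (actedPolyComp (σ ⁅x, y⁆) (lin ⁅x, y⁆) (act ⁅x, y⁆ a₀)
              (fun i (u : Fin i → A) => pC i u)) a := by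
  intro x y a
  have hact : act ⁅x, y⁆ a₀ = lin x (act y a₀) - lin y (act x a₀) :=
    (sub_eq_zero.mp (hcoc x y a₀)).symm
  rw [hσ, lin_lie_eq_of_affine_cocycle act lin haff hcoc, hact]
  simp only [polyFromComp, ← Finset.sum_sub_distrib, ← smul_sub]
  refine Finset.sum_congr rfl fun i _ => ?_
  rw [actedPolyComp_sub_actedPolyComp _ _ _ _ _ _ pC i (hpsym (i + 2) _)]

/-- The operation `(x, p) ↦ x·p` on polynomials of degree ≤ k on an affine
representation `𝒜` of `L`, valued in a representation `(W, σ)`, is a representation of `L`: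
`x·(y·p) − y·(x·p) = [x,y]·p` as functions `𝒜 → W`. -/
theorem action_on_polynomials_is_representation
    {L : Type*} [LieRing L] [LieAlgebra ℝ L]
    {A : Type*} [AddCommGroup A] [Module ℝ A]
    {𝒜 : Type*} [AddTorsor A 𝒜]
    {W : Type*} [AddCommGroup W] [Module ℝ W]
    (act : L → 𝒜 → A) (lin : L → A →ₗ[ℝ] A)
    (hadd : ∀ (x y : L) (a : 𝒜), act (x + y) a = act x a + act y a)
    (hsmul : ∀ (r : ℝ) (x : L) (a : 𝒜), act (r • x) a = r • act x a)
    (haff : ∀ (x : L) (u : A) (a : 𝒜), act x (u +ᵥ a) = act x a + lin x u)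
    (hcoc : ∀ (x y : L) (a : 𝒜), lin x (act y a) - lin y (act x a) - act ⁅x, y⁆ a = 0)
    (σ : L →ₗ[ℝ] W →ₗ[ℝ] W)
    (hσ : ∀ x y : L, σ ⁅x, y⁆ = σ x ∘ₗ σ y - σ y ∘ₗ σ x)
    (k : ℕ) (a₀ : 𝒜)
    (pC : ∀ i : ℕ, MultilinearMap ℝ (fun _ : Fin i => A) W)
    (hpsym : ∀ (i : ℕ) (e : Equiv.Perm (Fin i)) (u : Fin i → A),
        pC i (fun t => u (e t)) = pC i u)
    (hptrunc : ∀ i : ℕ, k < i → pC i = 0) :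
    ∀ (x y : L) (a : 𝒜),
      polyFromComp a₀ k
          (actedPolyComp (σ x) (lin x) (act x a₀)
            (actedPolyComp (σ y) (lin y) (act y a₀) (fun i (u : Fin i → A) => pC i u))) a
        - polyFromComp a₀ k
            (actedPolyComp (σ y) (lin y) (act y a₀)
              (actedPolyComp (σ x) (lin x) (act x a₀) (fun i (u : Fin i → A) => pC i u))) a
        = polyFromComp a₀ k
            (actedPolyComp (σ ⁅x, y⁆) (lin ⁅x, y⁆) (act ⁅x, y⁆ a₀)
              (fun i (u : Fin i → A) => pC i u)) a :=
  action_on_polynomials_is_representation_general act lin haff hcoc σ hσ k a₀ pC hpsym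
end

section
/- Let L be a real Lie algebra and let 𝒜 and 𝒜' be affine representations of L modeled on the same real vector space A and having the same linear parts, i.e. there is a representation ρ of L on A with x⃗_𝒜 = x⃗_{𝒜'} = ρ(x) for all x ∈ L. Fix a₀ ∈ 𝒜 and a₀' ∈ 𝒜'. Then there exists a linear map θ : End(A) → A such that t(x·a₀') = t(x·a₀) + ρ(x)(θ(t)) − θ(ρ(x)∘t − t∘ρ(x)) for all x ∈ L and all t ∈ End(A), if and only if there exists u ∈ A such that x·a₀' = x·a₀ + ρ(x)(u) for all x ∈ L (i.e. the basepoint cocycles of 𝒜 and 𝒜' are cohomologous). -/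
section Cohomologous

variable {R ι A : Type*} [CommRing R] [AddCommGroup A] [Module R A]
  (ρ : ι → A →ₗ[R] A) (c c' : ι → A)

theorem exists_eq_add_of_forall_apply_eq (θ : (A →ₗ[R] A) →ₗ[R] A)
    (hθ : ∀ x t, t (c' x) = t (c x) + ρ x (θ t) - θ (ρ x ∘ₗ t - t ∘ₗ ρ x)) :
    ∃ u, ∀ x, c' x = c x + ρ x u :=
  ⟨θ LinearMap.id, fun x => by simpa using hθ x LinearMap.id⟩

theorem forall_applyₗ_eq_of_eq_add (u : A) (hu : ∀ x, c' x = c x + ρ x u) (x : ι)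
    (t : A →ₗ[R] A) :
    t (c' x) = t (c x) + ρ x (LinearMap.applyₗ u t)
      - LinearMap.applyₗ u (ρ x ∘ₗ t - t ∘ₗ ρ x) := by
  simp only [hu x, LinearMap.applyₗ_apply_apply, LinearMap.sub_apply, LinearMap.comp_apply,
    map_add]
  abel

theorem exists_forall_apply_eq_iff_exists_eq_add :
    (∃ θ : (A →ₗ[R] A) →ₗ[R] A,
        ∀ x t, t (c' x) = t (c x) + ρ x (θ t) - θ (ρ x ∘ₗ t - t ∘ₗ ρ x))
      ↔ ∃ u, ∀ x, c' x = c x + ρ x u :=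
  ⟨fun ⟨θ, hθ⟩ => exists_eq_add_of_forall_apply_eq ρ c c' θ hθ,
    fun ⟨u, hu⟩ => ⟨LinearMap.applyₗ u, forall_applyₗ_eq_of_eq_add ρ c c' u hu⟩⟩

end Cohomologous

theorem first_sequences_isomorphic_iff_classes_equal_general
    {L : Type*}
    {A : Type*} [AddCommGroup A] [Module ℝ A]
    {𝒜 : Type*}
    {𝒜' : Type*}
    (ρ : L → A →ₗ[ℝ] A)
    (act : L → 𝒜 → A) (act' : L → 𝒜' → A)
    (a₀ : 𝒜) (a₀' : 𝒜') :
    (∃ θ : (A →ₗ[ℝ] A) →ₗ[ℝ] A,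
        ∀ (x : L) (t : A →ₗ[ℝ] A),
          t (act' x a₀') = t (act x a₀) + ρ x (θ t) - θ (ρ x ∘ₗ t - t ∘ₗ ρ x))
      ↔ (∃ u : A, ∀ x : L, act' x a₀' = act x a₀ + ρ x u) :=
  exists_forall_apply_eq_iff_exists_eq_add ρ (fun x => act x a₀) (fun x => act' x a₀')

/-- Let `𝒜`, `𝒜'` be affine representations of `L` modeled on the same vector
space `A`, with the same linear parts `ρ`. There exists a linear `θ : End(A) → A` with
`t(x·a₀') = t(x·a₀) + ρ(x)(θ(t)) − θ(ρ(x)∘t − t∘ρ(x))` for all `x`, `t`, iff there exists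
`u ∈ A` with `x·a₀' = x·a₀ + ρ(x)(u)` for all `x` (the basepoint cocycles are cohomologous). -/
theorem first_sequences_isomorphic_iff_classes_equal
    {L : Type*} [LieRing L] [LieAlgebra ℝ L]
    {A : Type*} [AddCommGroup A] [Module ℝ A]
    {𝒜 : Type*} [AddTorsor A 𝒜]
    {𝒜' : Type*} [AddTorsor A 𝒜']
    (ρ : L → A →ₗ[ℝ] A)
    (act : L → 𝒜 → A) (act' : L → 𝒜' → A)
    (hadd : ∀ (x y : L) (a : 𝒜), act (x + y) a = act x a + act y a)
    (hsmul : ∀ (r : ℝ) (x : L) (a : 𝒜), act (r • x) a = r • act x a)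
    (haff : ∀ (x : L) (u : A) (a : 𝒜), act x (u +ᵥ a) = act x a + ρ x u)
    (hcoc : ∀ (x y : L) (a : 𝒜), ρ x (act y a) - ρ y (act x a) - act ⁅x, y⁆ a = 0)
    (hadd' : ∀ (x y : L) (a : 𝒜'), act' (x + y) a = act' x a + act' y a)
    (hsmul' : ∀ (r : ℝ) (x : L) (a : 𝒜'), act' (r • x) a = r • act' x a)
    (haff' : ∀ (x : L) (u : A) (a : 𝒜'), act' x (u +ᵥ a) = act' x a + ρ x u)
    (hcoc' : ∀ (x y : L) (a : 𝒜'), ρ x (act' y a) - ρ y (act' x a) - act' ⁅x, y⁆ a = 0)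
    (a₀ : 𝒜) (a₀' : 𝒜') :
    (∃ θ : (A →ₗ[ℝ] A) →ₗ[ℝ] A,
        ∀ (x : L) (t : A →ₗ[ℝ] A),
          t (act' x a₀') = t (act x a₀) + ρ x (θ t) - θ (ρ x ∘ₗ t - t ∘ₗ ρ x))
      ↔ (∃ u : A, ∀ x : L, act' x a₀' = act x a₀ + ρ x u) :=
  first_sequences_isomorphic_iff_classes_equal_general ρ act act' a₀ a₀'
end

section
/- Let m > 1 and let S : ℝ^m → V be a smooth symmetric (1,2)-tensor field on ℝ^m. If L_X S = 0 for every smooth vector field X on ℝ^m, then S = 0. -/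
/-- The Lie derivative of a (1,2)-tensor field `S` on `ℝ^m` along a vector field `X`:
`(L_X S)(p)(u,v) = DS(p)(X(p))(u,v) − DX(p)(S(p)(u,v)) + S(p)(DX(p)u, v) + S(p)(u, DX(p)v)`. -/
noncomputable def lieDerivTensor (m : ℕ)
    (X : (Fin m → ℝ) → (Fin m → ℝ))
    (S : (Fin m → ℝ) → ((Fin m → ℝ) →L[ℝ] (Fin m → ℝ) →L[ℝ] (Fin m → ℝ)))
    (p u v : Fin m → ℝ) : Fin m → ℝ :=
  fderiv ℝ S p (X p) u v - fderiv ℝ X p (S p u v)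
    + S p (fderiv ℝ X p u) v + S p u (fderiv ℝ X p v)

/-! Along a constant field `c` the Lie derivative is `DS(p)(c)`, so `DS ≡ 0`. Along the
identity field, `DX = id` and the Lie derivative is `DS(p)(p) + S(p)`, hence `S = 0`. -/

section

variable {m : ℕ} (S : (Fin m → ℝ) → ((Fin m → ℝ) →L[ℝ] (Fin m → ℝ) →L[ℝ] (Fin m → ℝ)))

theorem lieDerivTensor_const (c p u v : Fin m → ℝ) :
    lieDerivTensor m (fun _ => c) S p u v = fderiv ℝ S p c u v := by
  simp [lieDerivTensor]

theorem lieDerivTensor_id (p u v : Fin m → ℝ) :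
    lieDerivTensor m id S p u v = fderiv ℝ S p p u v + S p u v := by
  simp only [lieDerivTensor, fderiv_id, ContinuousLinearMap.coe_id', id_eq]
  abel

end

theorem tensor_field_with_vanishing_lie_derivatives_is_zero_general
    (m : ℕ)
    (S : (Fin m → ℝ) → ((Fin m → ℝ) →L[ℝ] (Fin m → ℝ) →L[ℝ] (Fin m → ℝ)))
    (h : ∀ X : (Fin m → ℝ) → (Fin m → ℝ), ContDiff ℝ (⊤ : ℕ∞) X →
        ∀ p u v : Fin m → ℝ, lieDerivTensor m X S p u v = 0) :
    S = 0 := by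
  have hDS : ∀ p c u v : Fin m → ℝ, fderiv ℝ S p c u v = 0 := fun p c u v => by
    rw [← lieDerivTensor_const]
    exact h _ contDiff_const p u v
  ext p u v : 3
  have hid := h id contDiff_id p u v
  rwa [lieDerivTensor_id, hDS, zero_add] at hid

/-- For `m > 1`, a smooth symmetric (1,2)-tensor field `S` on `ℝ^m` whose Lie
derivative along every smooth vector field vanishes is zero. -/
theorem tensor_field_with_vanishing_lie_derivatives_is_zero
    (m : ℕ) (hm : 1 < m)
    (S : (Fin m → ℝ) → ((Fin m → ℝ) →L[ℝ] (Fin m → ℝ) →L[ℝ] (Fin m → ℝ)))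
    (hS : ContDiff ℝ (⊤ : ℕ∞) S)
    (hsymm : ∀ p u v : Fin m → ℝ, S p u v = S p v u)
    (h : ∀ X : (Fin m → ℝ) → (Fin m → ℝ), ContDiff ℝ (⊤ : ℕ∞) X →
        ∀ p u v : Fin m → ℝ, lieDerivTensor m X S p u v = 0) :
    S = 0 :=
  tensor_field_with_vanishing_lie_derivatives_is_zero_general m S h
end

section
/- Let m > 1 and let (a,b) ∈ ℝ² with (a,b) ≠ (0,0). Then there is no smooth symmetric (1,2)-tensor field T on ℝ^m such that, for every smooth vector field X on ℝ^m, L_X T = a·pr(Hess X) + b·(tr(Hess X))𝟙, where Hess X is the tensor field p ↦ D²X(p) (the second derivative of X at p, a symmetric bilinear map ℝ^m × ℝ^m → ℝ^m), pr(S) = S − (1/(m+1))tr(S)𝟙, and the right-hand side is evaluated pointwise. (Equivalently: the 1-cocycles X ↦ pr(Hess X) and X ↦ (tr(Hess X))𝟙 have linearly independent, in particular nonzero, cohomology classes.) -/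
set_option maxHeartbeats 1000000


/-- The trace `tr(S) ∈ (ℝ^m)*` of a bilinear map `S`, evaluated at `u`: the trace of the
endomorphism `v ↦ S u v`. -/
noncomputable def trBil (m : ℕ)
    (S : (Fin m → ℝ) →L[ℝ] (Fin m → ℝ) →L[ℝ] (Fin m → ℝ)) (u : Fin m → ℝ) : ℝ :=
  LinearMap.trace ℝ (Fin m → ℝ) (S u : (Fin m → ℝ) →ₗ[ℝ] (Fin m → ℝ))

/-- The Hessian of a vector field `X` on `ℝ^m` at `p`, i.e. the second derivative `D²X(p)`,
which equals the Lie derivative `L_X ∇⁰` of the canonical flat connection. -/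
noncomputable def hessVF (m : ℕ) (X : (Fin m → ℝ) → (Fin m → ℝ)) (p : Fin m → ℝ) :
    (Fin m → ℝ) →L[ℝ] (Fin m → ℝ) →L[ℝ] (Fin m → ℝ) :=
  fderiv ℝ (fderiv ℝ X) p

/-- For `m > 1` and `(a,b) ≠ (0,0)`, there is no smooth symmetric
(1,2)-tensor field `T` on `ℝ^m` with `L_X T = a·pr(Hess X) + b·(tr(Hess X))𝟙` for every
smooth vector field `X`; i.e. the cocycles `X ↦ pr(Hess X)` and `X ↦ (tr(Hess X))𝟙` have
linearly independent cohomology classes. -/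
theorem pr_and_tr_cocycles_linearly_independent
    (m : ℕ) (hm : 1 < m) (a b : ℝ) (hab : ¬(a = 0 ∧ b = 0)) :
    ¬ ∃ T : (Fin m → ℝ) → ((Fin m → ℝ) →L[ℝ] (Fin m → ℝ) →L[ℝ] (Fin m → ℝ)),
        ContDiff ℝ (⊤ : ℕ∞) T ∧
        (∀ p u v : Fin m → ℝ, T p u v = T p v u) ∧
        (∀ X : (Fin m → ℝ) → (Fin m → ℝ), ContDiff ℝ (⊤ : ℕ∞) X →
          ∀ p u v : Fin m → ℝ,
            lieDerivTensor m X T p u v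
              = a • (hessVF m X p u v - ((m : ℝ) + 1)⁻¹ •
                    (trBil m (hessVF m X p) u • v + trBil m (hessVF m X p) v • u))
                + b • (trBil m (hessVF m X p) u • v + trBil m (hessVF m X p) v • u)) := by
  rintro ⟨T, -, -, hT⟩
  set i0 : Fin m := ⟨0, by omega⟩ with hi0
  set i1 : Fin m := ⟨1, by omega⟩ with hi1
  have hi01 : i0 ≠ i1 := by simp [hi0, hi1, Fin.ext_iff]
  set c : Fin m → ℝ := Pi.single i0 (1 : ℝ) with hc
  set e1 : Fin m → ℝ := Pi.single i1 (1 : ℝ) with he1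
  -- Step A: X = id gives T 0 = 0
  have hhid : hessVF m (id : (Fin m → ℝ) → (Fin m → ℝ)) = fun _ => 0 := by
    funext p
    have h1 : fderiv ℝ (id : (Fin m → ℝ) → (Fin m → ℝ))
        = fun _ => ContinuousLinearMap.id ℝ (Fin m → ℝ) := by
      funext q; exact fderiv_id
    unfold hessVF
    rw [h1, fderiv_fun_const]
    rfl
  have hT0 : ∀ u v : Fin m → ℝ, T 0 u v = 0 := by
    intro u v
    have h := hT id contDiff_id 0 u v
    rw [hhid] at h
    unfold lieDerivTensor at h
    simp only [id_eq, fderiv_id, ContinuousLinearMap.id_apply] at h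
    have htr : trBil m (0 : (Fin m → ℝ) →L[ℝ] (Fin m → ℝ) →L[ℝ] (Fin m → ℝ)) = fun _ => 0 := by
      funext w; unfold trBil; simp
    rw [htr] at h
    simp only [ContinuousLinearMap.map_zero, ContinuousLinearMap.zero_apply,
      ContinuousLinearMap.zero_apply] at h
    -- h : 0 - T 0 u v + T 0 u v + T 0 u v = ...
    simpa using h
  -- Step B: quadratic field
  set L : (Fin m → ℝ) →L[ℝ] ℝ :=
    ContinuousLinearMap.proj (R := ℝ) (φ := fun _ : Fin m => ℝ) i0 with hL
  set A : (Fin m → ℝ) →L[ℝ] (Fin m → ℝ) →L[ℝ] (Fin m → ℝ) :=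
    L.smulRight (L.smulRight c) with hA
  set X : (Fin m → ℝ) → (Fin m → ℝ) := fun p => (p i0 * p i0) • c with hX
  have hXsm : ContDiff ℝ (⊤ : ℕ∞) X := by
    exact ((L.contDiff.mul L.contDiff).smul contDiff_const)
  have hd1 : ∀ p, HasFDerivAt X ((A + A) p) p := by
    intro p
    have h := ((L.hasFDerivAt (x := p)).mul (L.hasFDerivAt (x := p))).smul_const c
    refine h.congr_fderiv ?_
    ext w j
    simp [hA, ContinuousLinearMap.smulRight_apply, hL, smul_smul]
    ring
  have hfd : fderiv ℝ X = fun p => (A + A) p := funext fun p => (hd1 p).fderiv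
  have hhX : hessVF m X 0 = A + A := by
    unfold hessVF
    rw [hfd]
    exact (A + A).fderiv
  have hAapp : ∀ u v : Fin m → ℝ, (A + A) u v = (2 * u i0 * v i0) • c := by
    intro u v
    simp [hA, ContinuousLinearMap.smulRight_apply, hL, smul_smul]
    module
  have htrA : ∀ u : Fin m → ℝ, trBil m (A + A) u = 2 * u i0 := by
    intro u
    unfold trBil
    have h1 : ((A + A) u : (Fin m → ℝ) →ₗ[ℝ] (Fin m → ℝ))
        = (2 * u i0) • ((L.smulRight c : (Fin m → ℝ) →L[ℝ] (Fin m → ℝ)) :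
            (Fin m → ℝ) →ₗ[ℝ] (Fin m → ℝ)) := by
      ext v j
      simp [hA, ContinuousLinearMap.smulRight_apply, hL, smul_smul]
      ring
    rw [h1, map_smul]
    have h2 : LinearMap.trace ℝ (Fin m → ℝ)
        ((L.smulRight c : (Fin m → ℝ) →L[ℝ] (Fin m → ℝ)) :
          (Fin m → ℝ) →ₗ[ℝ] (Fin m → ℝ)) = 1 := by
      rw [LinearMap.trace_eq_matrix_trace ℝ (Pi.basisFun ℝ (Fin m))]
      rw [Matrix.trace]
      simp only [Matrix.diag, LinearMap.toMatrix_apply, Pi.basisFun_repr,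
        Pi.basisFun_apply, ContinuousLinearMap.coe_coe,
        ContinuousLinearMap.smulRight_apply, ContinuousLinearMap.proj_apply, hL, hc]
      rw [Finset.sum_eq_single i0]
      · simp [Pi.single_apply]
      · intro b _ hb
        simp [Pi.single_apply, hb, Ne.symm hb]
      · simp
    rw [h2]
    simp
  -- the main equation from the quadratic field
  have key : ∀ u v : Fin m → ℝ,
      (0 : Fin m → ℝ)
        = a • ((2 * u i0 * v i0) • c - ((m : ℝ) + 1)⁻¹ •
              ((2 * u i0) • v + (2 * v i0) • u))
          + b • ((2 * u i0) • v + (2 * v i0) • u) := by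
    intro u v
    have h := hT X hXsm 0 u v
    rw [hhX] at h
    rw [htrA u, htrA v, hAapp u v] at h
    unfold lieDerivTensor at h
    have hX0 : X 0 = 0 := by simp [hX]
    rw [hfd] at h
    simp only [hX0, ContinuousLinearMap.map_zero, ContinuousLinearMap.zero_apply,
      hT0] at h
    simpa [hT0] using h
  -- evaluate at (c, c) coordinate i0
  have hc0 : c i0 = (1 : ℝ) := Pi.single_eq_same i0 1
  have hc1 : c i1 = (0 : ℝ) := Pi.single_eq_of_ne (Ne.symm hi01) 1
  have he10 : e1 i0 = (0 : ℝ) := Pi.single_eq_of_ne hi01 1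
  have he11 : e1 i1 = (1 : ℝ) := Pi.single_eq_same i1 1
  have eq1 : (0 : ℝ) = a * (2 - ((m : ℝ) + 1)⁻¹ * 4) + b * 4 := by
    have h := congrFun (key c c) i0
    simp only [Pi.zero_apply, Pi.smul_apply, Pi.sub_apply, Pi.add_apply,
      smul_eq_mul, hc0] at h
    linear_combination h
  have eq2 : (0 : ℝ) = a * (0 - ((m : ℝ) + 1)⁻¹ * 2) + b * 2 := by
    have h := congrFun (key c e1) i1
    simp only [Pi.zero_apply, Pi.smul_apply, Pi.sub_apply, Pi.add_apply,
      smul_eq_mul, hc0, hc1, he10, he11] at h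
    linear_combination h
  have ha : a = 0 := by linear_combination (2 * eq2 - eq1) / 2
  have hb : b = 0 := by
    rw [ha] at eq2; linarith [eq2]
  exact hab ⟨ha, hb⟩
end

section
/- Let m > 1 and let T be a real-linear map from the space of smooth vector fields on ℝ^m to the space of smooth symmetric (1,2)-tensor fields on ℝ^m. Suppose its coboundary ∂T(X,Y) = L_X(T(Y)) − L_Y(T(X)) − T([X,Y]) is local, in the sense that for every open set U ⊆ ℝ^m and all smooth vector fields X, Y, if X vanishes on U or Y vanishes on U then ∂T(X,Y) vanishes on U. Then T is local: for every open set U and every smooth vector field X vanishing on U, T(X) vanishes on U. -/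
open scoped Manifold


/-- The space of smooth vector fields on `ℝ^m`. -/
noncomputable def smoothVectorFields (m : ℕ) :
    Submodule ℝ ((Fin m → ℝ) → (Fin m → ℝ)) where
  carrier := {X | ContDiff ℝ (⊤ : ℕ∞) X}
  add_mem' := by
    intro X Y hX hY
    have hX' : ContDiff ℝ (⊤ : ℕ∞) X := hX
    have hY' : ContDiff ℝ (⊤ : ℕ∞) Y := hY
    exact hX'.add hY'
  zero_mem' := show ContDiff ℝ (⊤ : ℕ∞) (0 : (Fin m → ℝ) → (Fin m → ℝ)) from contDiff_const
  smul_mem' := by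
    intro c X hX
    have hX' : ContDiff ℝ (⊤ : ℕ∞) X := hX
    exact hX'.const_smul c

/-- The space of smooth symmetric (1,2)-tensor fields on `ℝ^m`. -/
noncomputable def symTensorFields (m : ℕ) :
    Submodule ℝ ((Fin m → ℝ) → ((Fin m → ℝ) →L[ℝ] (Fin m → ℝ) →L[ℝ] (Fin m → ℝ))) where
  carrier := {S | ContDiff ℝ (⊤ : ℕ∞) S ∧ ∀ p u v : Fin m → ℝ, S p u v = S p v u}
  add_mem' := by
    intro S S' hS hS'
    refine ⟨hS.1.add hS'.1, fun p u v => ?_⟩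
    simp [hS.2 p u v, hS'.2 p u v]
  zero_mem' := ⟨contDiff_const, by simp⟩
  smul_mem' := by
    intro c S hS
    refine ⟨hS.1.const_smul c, fun p u v => ?_⟩
    simp [hS.2 p u v]

/-- If `T` is a linear map from smooth vector fields on `ℝ^m` to smooth
symmetric (1,2)-tensor fields whose coboundary
`∂T(X,Y) = L_X(T(Y)) − L_Y(T(X)) − T([X,Y])` is local, then `T` is local. -/
theorem locality_of_coboundary_implies_locality
    (m : ℕ) (hm : 1 < m)
    (T : smoothVectorFields m →ₗ[ℝ] symTensorFields m)
    (hloc : ∀ U : Set (Fin m → ℝ), IsOpen U →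
        ∀ X Y Z : smoothVectorFields m,
          (∀ p : Fin m → ℝ, Z.1 p = fderiv ℝ Y.1 p (X.1 p) - fderiv ℝ X.1 p (Y.1 p)) →
          ((∀ p ∈ U, X.1 p = 0) ∨ (∀ p ∈ U, Y.1 p = 0)) →
          ∀ p ∈ U, ∀ u v : Fin m → ℝ,
            lieDerivTensor m X.1 (T Y).1 p u v - lieDerivTensor m Y.1 (T X).1 p u v
              - (T Z).1 p u v = 0) :
    ∀ U : Set (Fin m → ℝ), IsOpen U →
      ∀ X : smoothVectorFields m, (∀ p ∈ U, X.1 p = 0) →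
      ∀ p ∈ U, (T X).1 p = 0 := by
  intro U hU X hXU p hp
  have hvanish : ∀ (W : (Fin m → ℝ) → (Fin m → ℝ)) (V : Set (Fin m → ℝ)), IsOpen V →
      (∀ q ∈ V, W q = 0) → ∀ q ∈ V, fderiv ℝ W q = 0 := by
    intro W V hV h q hq
    have h1 : W =ᶠ[nhds q] fun _ => (0 : Fin m → ℝ) :=
      Filter.eventuallyEq_of_mem (hV.mem_nhds hq) h
    rw [h1.fderiv_eq]
    exact fderiv_const_apply 0
  have hXsm : ContDiff ℝ (⊤ : ℕ∞) X.1 := X.2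
  have hXp : X.1 p = 0 := hXU p hp
  have hXd : fderiv ℝ X.1 p = 0 := hvanish X.1 U hU hXU p hp
  -- if a vector field is flat at p, its Lie derivative kills any tensor at p
  have hflat : ∀ (W : (Fin m → ℝ) → (Fin m → ℝ))
      (Sf : (Fin m → ℝ) → ((Fin m → ℝ) →L[ℝ] (Fin m → ℝ) →L[ℝ] (Fin m → ℝ))),
      W p = 0 → fderiv ℝ W p = 0 → ∀ u v, lieDerivTensor m W Sf p u v = 0 := by
    intro W Sf hW0 hWd u v
    simp only [lieDerivTensor]
    rw [hW0, hWd]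
    simp only [ContinuousLinearMap.map_zero, ContinuousLinearMap.zero_apply, sub_zero,
      zero_sub, add_zero, zero_add, neg_zero]
  -- Lie derivative along a field with W p = 0 and DW p = id gives back the tensor
  have hlieE : ∀ (W : (Fin m → ℝ) → (Fin m → ℝ))
      (Sf : (Fin m → ℝ) → ((Fin m → ℝ) →L[ℝ] (Fin m → ℝ) →L[ℝ] (Fin m → ℝ))),
      W p = 0 → fderiv ℝ W p = ContinuousLinearMap.id ℝ (Fin m → ℝ) →
      ∀ u v, lieDerivTensor m W Sf p u v = Sf p u v := by
    intro W Sf hW0 hWd u v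
    simp only [lieDerivTensor]
    rw [hW0, hWd]
    simp only [ContinuousLinearMap.map_zero, ContinuousLinearMap.zero_apply,
      ContinuousLinearMap.id_apply, zero_sub]
    abel
  -- the Euler field centered at p
  set E : (Fin m → ℝ) → (Fin m → ℝ) := fun q => q - p with hEdef
  have hEsm : ContDiff ℝ (⊤ : ℕ∞) E := contDiff_id.sub contDiff_const
  have hEd : ∀ q, fderiv ℝ E q = ContinuousLinearMap.id ℝ (Fin m → ℝ) := by
    intro q
    rw [hEdef, fderiv_sub_const]
    exact fderiv_id'
  have hEp : E p = 0 := sub_self p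
  -- the auxiliary field Z1 = DX·E − X
  set Z1 : (Fin m → ℝ) → (Fin m → ℝ) := fun q => fderiv ℝ X.1 q (E q) - X.1 q with hZdef
  have hZsm : ContDiff ℝ (⊤ : ℕ∞) Z1 :=
    ((hXsm.fderiv_right (le_refl _)).clm_apply (contDiff_id.sub contDiff_const)).sub hXsm
  let Eel : smoothVectorFields m := ⟨E, hEsm⟩
  let Zel : smoothVectorFields m := ⟨Z1, hZsm⟩
  -- first application of locality, with the pair (E, X)
  have hcond1 : ∀ q, Zel.1 q = fderiv ℝ X.1 q (Eel.1 q) - fderiv ℝ Eel.1 q (X.1 q) := by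
    intro q
    show Z1 q = fderiv ℝ X.1 q (E q) - fderiv ℝ E q (X.1 q)
    rw [hEd q, hZdef]
    simp
  have happ1 := hloc U hU Eel X Zel hcond1 (Or.inr hXU) p hp
  -- bump function construction
  obtain ⟨ε, hε, hball⟩ := Metric.isOpen_iff.mp hU p hp
  set r := ε / 3 with hrdef
  have hr : 0 < r := by positivity
  have hballU : Metric.ball p r ⊆ U :=
    (Metric.ball_subset_ball (by rw [hrdef]; linarith)).trans hball
  have hdisj : Disjoint (Metric.closedBall p r) ((Metric.ball p (2*r))ᶜ) := by
    refine Set.disjoint_left.mpr fun x hx hxc => hxc ?_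
    exact Metric.closedBall_subset_ball (by linarith) hx
  obtain ⟨f, h0, h1, -⟩ := exists_contMDiffMap_zero_one_of_isClosed (n := (⊤ : ℕ∞)) 𝓘(ℝ, Fin m → ℝ)
    Metric.isClosed_closedBall (Metric.isOpen_ball.isClosed_compl) hdisj
  have hfsm : ContDiff ℝ (⊤ : ℕ∞) (f : (Fin m → ℝ) → ℝ) := contMDiff_iff_contDiff.mp f.contMDiff
  set Y2 : (Fin m → ℝ) → (Fin m → ℝ) := fun q => f q • E q with hY2def
  have hY2sm : ContDiff ℝ (⊤ : ℕ∞) Y2 := hfsm.smul hEsm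
  have hY2V : ∀ q ∈ Metric.ball p r, Y2 q = 0 := by
    intro q hq
    have hf0 : f q = 0 := h0 (Metric.ball_subset_closedBall hq)
    show f q • E q = 0
    rw [hf0, zero_smul]
  let Y2el : smoothVectorFields m := ⟨Y2, hY2sm⟩
  -- second application of locality, with the pair (Y2, X)
  have hcond2 : ∀ q, Zel.1 q = fderiv ℝ X.1 q (Y2el.1 q) - fderiv ℝ Y2el.1 q (X.1 q) := by
    intro q
    show Z1 q = fderiv ℝ X.1 q (Y2 q) - fderiv ℝ Y2 q (X.1 q)
    by_cases hq : q ∈ U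
    · have hXq : X.1 q = 0 := hXU q hq
      have hXdq : fderiv ℝ X.1 q = 0 := hvanish X.1 U hU hXU q hq
      rw [hZdef]
      simp [hXq, hXdq]
    · have hq2 : q ∈ (Metric.closedBall p (2*r))ᶜ := by
        intro hmem
        exact hq (hball (lt_of_le_of_lt (Metric.mem_closedBall.mp hmem) (by rw [hrdef]; linarith)))
      have hone : ∀ x ∈ (Metric.closedBall p (2*r))ᶜ, Y2 x = E x := by
        intro x hx
        have hf1 : f x = 1 := h1 fun hxb => hx (Metric.ball_subset_closedBall hxb)
        show f x • E x = E x
        rw [hf1, one_smul]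
      have hfe : Y2 =ᶠ[nhds q] E :=
        Filter.eventuallyEq_of_mem (Metric.isClosed_closedBall.isOpen_compl.mem_nhds hq2) hone
      rw [hZdef, hfe.fderiv_eq, hEd q, hone q hq2]
      simp
  have happ2 := hloc (Metric.ball p r) Metric.isOpen_ball Y2el X Zel hcond2
    (Or.inl hY2V) p (Metric.mem_ball_self hr)
  have hY2p : Y2el.1 p = 0 := hY2V p (Metric.mem_ball_self hr)
  have hY2d : fderiv ℝ Y2el.1 p = 0 := hvanish Y2 (Metric.ball p r) Metric.isOpen_ball hY2V p
    (Metric.mem_ball_self hr)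
  -- conclude
  refine ContinuousLinearMap.ext fun u => ?_
  refine ContinuousLinearMap.ext fun v => ?_
  have e1 := happ1 u v
  have e2 := happ2 u v
  rw [hlieE Eel.1 (T X).1 hEp (hEd p) u v, hflat X.1 (T Eel).1 hXp hXd u v] at e1
  rw [hflat Y2el.1 (T X).1 hY2p hY2d u v, hflat X.1 (T Y2el).1 hXp hXd u v] at e2
  have hTZ : (T Zel).1 p u v = 0 := by
    have := e2
    simpa using this
  rw [hTZ] at e1
  simpa using e1
end
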